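/- arXiv:1805.10451 — 3 statements merged into one kernel-verified Lean document; each statement's English description precedes it below -/
import Mathlib

section
/- The maximum number of regions into which n hyperplanes can partition d-dimensional Euclidean space R^d equals the sum of binomial coefficients C(n,0) + C(n,1) + ... + C(n,d). -/
open Finset

def HypRealizable {d m : ℕ} (f : Fin m → ((Fin d → ℝ) →ᵃ[ℝ] ℝ)) (s : Fin m → Bool) : Prop :=
  ∃ x : Fin d → ℝ, ∀ i, if s i then 0 < f i x else f i x < 0

lemma combo_pos {u v t : ℝ} (hu : 0 < u) (hv : 0 < v) (h0 : 0 ≤ t) (h1 : t ≤ 1) :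
    0 < (1 - t) * u + t * v := by
  rcases eq_or_lt_of_le h0 with h | h
  · rw [← h]; simpa using hu
  · have h2 : 0 < t * v := mul_pos h hv
    have h3 : 0 ≤ (1 - t) * u := mul_nonneg (by linarith) hu.le
    linarith

lemma combo_neg {u v t : ℝ} (hu : u < 0) (hv : v < 0) (h0 : 0 ≤ t) (h1 : t ≤ 1) :
    (1 - t) * u + t * v < 0 := by
  have := combo_pos (u := -u) (v := -v) (by linarith) (by linarith) h0 h1
  linarith

lemma lineMap_real (u v t : ℝ) : AffineMap.lineMap u v t = (1 - t) * u + t * v := by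
  simp [AffineMap.lineMap_apply_module]

lemma exists_zero_on_segment {d m : ℕ} (f : Fin m → ((Fin d → ℝ) →ᵃ[ℝ] ℝ))
    (g : (Fin d → ℝ) →ᵃ[ℝ] ℝ) (s : Fin m → Bool) {x y : Fin d → ℝ}
    (hx : ∀ i, if s i then 0 < f i x else f i x < 0)
    (hy : ∀ i, if s i then 0 < f i y else f i y < 0)
    (hgx : 0 < g x) (hgy : g y < 0) :
    ∃ z, (∀ i, if s i then 0 < f i z else f i z < 0) ∧ g z = 0 := by
  set D := g x - g y with hD'
  have hD : 0 < D := by simp [hD']; linarith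
  set t := g x / D with ht'
  have ht0 : 0 ≤ t := div_nonneg hgx.le hD.le
  have ht1 : t ≤ 1 := by rw [ht', div_le_one hD]; simp [hD']; linarith
  refine ⟨AffineMap.lineMap x y t, ?_, ?_⟩
  · intro i
    have hfl : f i (AffineMap.lineMap x y t) = (1 - t) * f i x + t * f i y := by
      rw [AffineMap.apply_lineMap, lineMap_real]
    rw [hfl]
    have hxi := hx i; have hyi := hy i
    cases hsi : s i
    · simp only [hsi, if_neg] at hxi hyi ⊢
      simp only [Bool.false_eq_true, if_false] at hxi hyi ⊢
      exact combo_neg hxi hyi ht0 ht1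
    · simp only [hsi, if_true] at hxi hyi ⊢
      exact combo_pos hxi hyi ht0 ht1
  · rw [AffineMap.apply_lineMap, lineMap_real, ht', hD']
    have hD0 : g x - g y ≠ 0 := ne_of_gt (by linarith)
    field_simp
    ring

/-- Parametrize the zero set of a nonconstant affine functional on `ℝ^(d+1)` by `ℝ^d`. -/
lemma exists_param {d : ℕ} (g : (Fin (d+1) → ℝ) →ᵃ[ℝ] ℝ) (hg : g.linear ≠ 0) :
    ∃ e : (Fin d → ℝ) →ᵃ[ℝ] (Fin (d+1) → ℝ),
      (∀ y, g (e y) = 0) ∧ (∀ x, g x = 0 → ∃ y, e y = x) := by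
  classical
  set l := g.linear with hl
  -- pick v with l v ≠ 0
  have hv : ∃ v, l v ≠ 0 := by
    by_contra h
    push_neg at h
    exact hg (LinearMap.ext fun v => h v)
  obtain ⟨v, hv⟩ := hv
  -- point x₀ on the hyperplane
  set x₀ : Fin (d+1) → ℝ := (-(g 0) / l v) • v with hx₀
  have hgx0 : g x₀ = 0 := by
    have : g x₀ = l x₀ + g 0 := by
      have h := g.map_vadd (0 : Fin (d+1) → ℝ) x₀
      simpa using h
    rw [this, hx₀, map_smul]
    rw [smul_eq_mul, div_mul_cancel₀ _ hv]; ring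
  -- ker l has finrank d
  have hrange : Module.finrank ℝ (LinearMap.range l) = 1 := by
    have : LinearMap.range l = ⊤ := by
      rw [LinearMap.range_eq_top]
      intro c
      exact ⟨(c / l v) • v, by rw [map_smul, smul_eq_mul, div_mul_cancel₀ _ hv]⟩
    rw [this]
    simp [Module.finrank_self]
  have hker : Module.finrank ℝ (LinearMap.ker l) = d := by
    have h := LinearMap.finrank_range_add_finrank_ker l
    rw [hrange] at h
    have : Module.finrank ℝ (Fin (d+1) → ℝ) = d + 1 := by simp
    omega
  have hfe : Module.finrank ℝ (Fin d → ℝ) = Module.finrank ℝ (LinearMap.ker l) := by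
    rw [hker]; simp
  let φ : (Fin d → ℝ) ≃ₗ[ℝ] LinearMap.ker l := LinearEquiv.ofFinrankEq _ _ hfe
  refine ⟨⟨fun y => (φ y : Fin (d+1) → ℝ) + x₀, (LinearMap.ker l).subtype.comp φ.toLinearMap, ?_⟩, ?_, ?_⟩
  · intro p vv
    simp [map_add, add_comm, add_assoc, add_left_comm]
  · intro y
    have hmem : (φ y : Fin (d+1) → ℝ) ∈ LinearMap.ker l := (φ y).2
    have : g ((φ y : Fin (d+1) → ℝ) + x₀) = l (φ y) + g x₀ := by
      have h := g.map_vadd x₀ ((φ y : Fin (d+1) → ℝ))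
      simpa using h
    simp only [AffineMap.coe_mk]
    rw [this, LinearMap.mem_ker.mp hmem, hgx0, add_zero]
  · intro x hx
    have hmem : x - x₀ ∈ LinearMap.ker l := by
      rw [LinearMap.mem_ker]
      have : l (x - x₀) = g x - g x₀ := by
        simpa using g.linearMap_vsub x x₀
      rw [this, hx, hgx0, sub_zero]
    exact ⟨φ.symm ⟨x - x₀, hmem⟩, by simp⟩

lemma pascal_sum (m d : ℕ) :
    (∑ i ∈ range (d+1), m.choose i) + (∑ i ∈ range d, m.choose i)
      = ∑ i ∈ range (d+1), (m+1).choose i := by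
  induction d with
  | zero => simp
  | succ d IH =>
    have h1 : ∑ i ∈ range (d+1+1), m.choose i = (∑ i ∈ range (d+1), m.choose i) + m.choose (d+1) :=
      sum_range_succ _ _
    have h2 : ∑ i ∈ range (d+1), m.choose i = (∑ i ∈ range d, m.choose i) + m.choose d :=
      sum_range_succ _ _
    have h3 : ∑ i ∈ range (d+1+1), (m+1).choose i
        = (∑ i ∈ range (d+1), (m+1).choose i) + (m+1).choose (d+1) := sum_range_succ _ _
    have h4 : (m+1).choose (d+1) = m.choose d + m.choose (d+1) := Nat.choose_succ_succ m d
    omega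

lemma sum_choose_mono (m d : ℕ) :
    (∑ i ∈ range (d+1), m.choose i) ≤ ∑ i ∈ range (d+1), (m+1).choose i := by
  rw [← pascal_sum m d]; omega

lemma snoc_injective {m : ℕ} (b : Bool) :
    Function.Injective (fun s' : Fin m → Bool => (Fin.snoc s' b : Fin (m+1) → Bool)) := by
  intro s t h
  funext i
  have := congrFun h i.castSucc
  simpa [Fin.snoc_castSucc] using this

theorem ncard_realizable_le : ∀ (m : ℕ) (d : ℕ) (f : Fin m → ((Fin d → ℝ) →ᵃ[ℝ] ℝ)),
    {s | HypRealizable f s}.ncard ≤ ∑ i ∈ range (d+1), m.choose i := by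
  intro m
  induction m with
  | zero =>
    intro d f
    have h1 : {s : Fin 0 → Bool | HypRealizable f s}.ncard ≤ (Set.univ : Set (Fin 0 → Bool)).ncard :=
      Set.ncard_le_ncard (Set.subset_univ _) Set.finite_univ
    rw [Set.ncard_univ] at h1
    have h2 : Nat.card (Fin 0 → Bool) = 1 := by simp [Nat.card_eq_fintype_card]
    have h3 : (1:ℕ) ≤ ∑ i ∈ range (d+1), Nat.choose 0 i := by
      rw [Finset.sum_range_succ' (fun i => Nat.choose 0 i) d]
      simp
    omega
  | succ m IH =>
    intro d f
    classical
    set f' : Fin m → ((Fin d → ℝ) →ᵃ[ℝ] ℝ) := fun i => f i.castSucc with hf'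
    set g := f (Fin.last m) with hg
    set A := {s : Fin (m+1) → Bool | HypRealizable f s} with hA
    set At := {s' : Fin m → Bool | HypRealizable f (Fin.snoc s' true)} with hAt
    set Af := {s' : Fin m → Bool | HypRealizable f (Fin.snoc s' false)} with hAf
    set A' := {s' : Fin m → Bool | HypRealizable f' s'} with hA'
    -- decompose A
    have hdec : A = ((fun s' => Fin.snoc s' true) '' At) ∪ ((fun s' => Fin.snoc s' false) '' Af) := by
      ext s
      constructor
      · intro hs
        have hsnoc : Fin.snoc (fun i => s i.castSucc) (s (Fin.last m)) = s := Fin.snoc_init_self s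
        cases hb : s (Fin.last m)
        · right
          refine ⟨fun i => s i.castSucc, ?_, by rw [← hb]; exact hsnoc⟩
          show HypRealizable f (Fin.snoc (fun i => s i.castSucc) false)
          rw [← hb, hsnoc]; exact hs
        · left
          refine ⟨fun i => s i.castSucc, ?_, by rw [← hb]; exact hsnoc⟩
          show HypRealizable f (Fin.snoc (fun i => s i.castSucc) true)
          rw [← hb, hsnoc]; exact hs
      · rintro (⟨s', hs', rfl⟩ | ⟨s', hs', rfl⟩) <;> exact hs'
    have hcardA : A.ncard = At.ncard + Af.ncard := by
      rw [hdec, Set.ncard_union_eq ?_ (Set.toFinite _) (Set.toFinite _),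
          Set.ncard_image_of_injective _ (snoc_injective true),
          Set.ncard_image_of_injective _ (snoc_injective false)]
      · rw [Set.disjoint_left]
        rintro s ⟨s', _, rfl⟩ ⟨t', _, h⟩
        have := congrFun h (Fin.last m)
        simp [Fin.snoc_last] at this
    -- union bound
    have hsubA' : At ∪ Af ⊆ A' := by
      rintro s' (hs' | hs') <;>
      · obtain ⟨x, hx⟩ := hs'
        refine ⟨x, fun i => ?_⟩
        have := hx i.castSucc
        simpa [hf', Fin.snoc_castSucc] using this
    have hunion : (At ∪ Af).ncard ≤ ∑ i ∈ range (d+1), m.choose i :=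
      le_trans (Set.ncard_le_ncard hsubA' (Set.toFinite _)) (IH d f')
    have hkey : (At ∪ Af).ncard + (At ∩ Af).ncard = A.ncard := by
      rw [Set.ncard_union_add_ncard_inter _ _ (Set.toFinite _) (Set.toFinite _), hcardA]
    by_cases hlin : g.linear = 0
    · -- last functional constant: At ∩ Af = ∅
      have hempty : At ∩ Af = ∅ := by
        ext s'
        simp only [Set.mem_inter_iff, Set.mem_empty_iff_false, iff_false, not_and]
        intro ⟨x, hx⟩ ⟨y, hy⟩
        have hgx : 0 < g x := by simpa [hg, Fin.snoc_last] using hx (Fin.last m)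
        have hgy : g y < 0 := by simpa [hg, Fin.snoc_last] using hy (Fin.last m)
        have : g x - g y = 0 := by
          have h := g.linearMap_vsub x y
          simp only [vsub_eq_sub] at h
          rw [← h, hlin]; simp
        linarith
      have : A.ncard ≤ ∑ i ∈ range (d+1), m.choose i := by
        rw [← hkey, hempty]; simpa using hunion
      exact le_trans this (sum_choose_mono m d)
    · -- last functional nonconstant: d = d'+1
      obtain ⟨d', rfl⟩ : ∃ d', d = d' + 1 := by
        cases d with
        | zero =>
          exfalso
          apply hlin
          apply LinearMap.ext
          intro v
          have hv0 : v = (0 : Fin 0 → ℝ) := funext fun i => i.elim0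
          rw [hv0, map_zero, LinearMap.zero_apply]
        | succ d' => exact ⟨d', rfl⟩
      obtain ⟨e, he0, hesurj⟩ := exists_param g hlin
      set h : Fin m → ((Fin d' → ℝ) →ᵃ[ℝ] ℝ) := fun i => (f' i).comp e with hh
      have hinter : At ∩ Af ⊆ {s' | HypRealizable h s'} := by
        rintro s' ⟨⟨x, hx⟩, ⟨y, hy⟩⟩
        have hgx : 0 < g x := by simpa [hg, Fin.snoc_last] using hx (Fin.last m)
        have hgy : g y < 0 := by simpa [hg, Fin.snoc_last] using hy (Fin.last m)
        have hx' : ∀ i, if s' i then 0 < f' i x else f' i x < 0 := by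
          intro i
          have := hx i.castSucc
          simpa [hf', Fin.snoc_castSucc] using this
        have hy' : ∀ i, if s' i then 0 < f' i y else f' i y < 0 := by
          intro i
          have := hy i.castSucc
          simpa [hf', Fin.snoc_castSucc] using this
        obtain ⟨z, hz, hgz⟩ := exists_zero_on_segment f' g s' hx' hy' hgx hgy
        obtain ⟨w, hw⟩ := hesurj z hgz
        refine ⟨w, fun i => ?_⟩
        have := hz i
        simpa [hh, AffineMap.comp_apply, hw] using this
      have hinterbound : (At ∩ Af).ncard ≤ ∑ i ∈ range (d'+1), m.choose i :=
        le_trans (Set.ncard_le_ncard hinter (Set.toFinite _)) (IH d' h)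
      have : A.ncard ≤ (∑ i ∈ range (d'+1+1), m.choose i) + ∑ i ∈ range (d'+1), m.choose i := by
        omega
      rw [pascal_sum m (d'+1)] at this
      exact this

def cellOf {d m : ℕ} (f : Fin m → ((Fin d → ℝ) →ᵃ[ℝ] ℝ)) (s : Fin m → Bool) : Set (Fin d → ℝ) :=
  {z | ∀ i, if s i then 0 < f i z else f i z < 0}

lemma cell_convex {d m : ℕ} (f : Fin m → ((Fin d → ℝ) →ᵃ[ℝ] ℝ)) (s : Fin m → Bool) :
    Convex ℝ (cellOf f s) := by
  intro x hx y hy a b ha hb hab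
  intro i
  have hax : a = 1 - b := by linarith
  have hcomb : a • x + b • y = AffineMap.lineMap x y b := by
    rw [AffineMap.lineMap_apply_module, hax]
  rw [hcomb]
  have hfl : f i (AffineMap.lineMap x y b) = (1 - b) * f i x + b * f i y := by
    rw [AffineMap.apply_lineMap, lineMap_real]
  rw [hfl]
  have hxi := hx i; have hyi := hy i
  have hb1 : b ≤ 1 := by linarith
  cases hsi : s i
  · simp only [hsi, Bool.false_eq_true, if_false] at hxi hyi ⊢
    exact combo_neg hxi hyi hb hb1
  · simp only [hsi, if_true] at hxi hyi ⊢
    exact combo_pos hxi hyi hb hb1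

theorem card_components_eq {d m : ℕ} (f : Fin m → ((Fin d → ℝ) →ᵃ[ℝ] ℝ)) :
    Nat.card (ConnectedComponents ({x : Fin d → ℝ | ∀ i, f i x ≠ 0} : Set (Fin d → ℝ)))
      = {s | HypRealizable f s}.ncard := by
  classical
  set S : Set (Fin d → ℝ) := {x | ∀ i, f i x ≠ 0} with hS
  set σ : S → (Fin m → Bool) := fun x => fun i => decide (0 < f i x.val) with hσ
  have hcont : Continuous σ := by
    apply continuous_pi
    intro i
    rw [continuous_discrete_rng]
    intro b
    cases b
    · have hpre : (fun x : S => decide (0 < f i x.val)) ⁻¹' {false}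
          = Subtype.val ⁻¹' {z | f i z < 0} := by
        ext x
        simp only [Set.mem_preimage, Set.mem_singleton_iff, decide_eq_false_iff_not, not_lt,
          Set.mem_setOf_eq]
        constructor
        · intro h; exact lt_of_le_of_ne h (x.2 i)
        · intro h; exact h.le
      show IsOpen ((fun x : S => decide (0 < f i x.val)) ⁻¹' {false})
      rw [hpre]
      exact ((isOpen_lt (f i).continuous_of_finiteDimensional continuous_const)).preimage
        continuous_subtype_val
    · have hpre : (fun x : S => decide (0 < f i x.val)) ⁻¹' {true}
          = Subtype.val ⁻¹' {z | 0 < f i z} := by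
        ext x
        simp [Set.mem_preimage, Set.mem_setOf_eq]
      show IsOpen ((fun x : S => decide (0 < f i x.val)) ⁻¹' {true})
      rw [hpre]
      exact ((isOpen_lt continuous_const (f i).continuous_of_finiteDimensional)).preimage
        continuous_subtype_val
  have hmem : ∀ x : S, x.val ∈ cellOf f (σ x) := by
    intro x i
    by_cases h : 0 < f i x.val
    · simp [hσ, h]
    · have hlt : f i x.val < 0 := lt_of_le_of_ne (not_lt.mp h) (x.2 i)
      simp only [hσ, h, decide_eq_true_eq]
      rw [if_neg]
      · exact hlt
      · simp [h]
  have hcell_sub : ∀ s : Fin m → Bool, cellOf f s ⊆ S := by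
    intro s z hz i
    have h := hz i
    cases hsi : s i
    · rw [hsi] at h; simp only [Bool.false_eq_true, if_false] at h; exact ne_of_lt h
    · rw [hsi] at h; simp only [if_true] at h; exact (ne_of_gt h)
  have hsame : ∀ x y : S, σ x = σ y → ConnectedComponents.mk x = ConnectedComponents.mk y := by
    intro x y hxy
    rw [ConnectedComponents.coe_eq_coe]
    apply connectedComponent_eq
    have hpre : IsPreconnected (Subtype.val ⁻¹' cellOf f (σ x) : Set S) := by
      rw [← (Topology.IsInducing.subtypeVal).isPreconnected_image]
      have himg : Subtype.val '' (Subtype.val ⁻¹' cellOf f (σ x) : Set S) = cellOf f (σ x) := by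
        rw [Set.image_preimage_eq_inter_range, Subtype.range_coe]
        exact Set.inter_eq_left.mpr (hcell_sub _)
      rw [himg]
      exact (cell_convex f (σ x)).isPreconnected
    have hxm : x ∈ (Subtype.val ⁻¹' cellOf f (σ x) : Set S) := hmem x
    have hym : y ∈ (Subtype.val ⁻¹' cellOf f (σ x) : Set S) := by
      show y.val ∈ cellOf f (σ x)
      rw [hxy]
      exact hmem y
    exact hpre.subset_connectedComponent hxm hym
  have hreal : ∀ c : ConnectedComponents S, HypRealizable f (hcont.connectedComponentsLift c) := by
    intro c
    obtain ⟨x, rfl⟩ := ConnectedComponents.surjective_coe c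
    rw [hcont.connectedComponentsLift_apply_coe]
    exact ⟨x.val, hmem x⟩
  have hbij : Function.Bijective
      (fun c => (⟨hcont.connectedComponentsLift c, hreal c⟩ :
        {s : Fin m → Bool // HypRealizable f s})) := by
    constructor
    · intro c₁ c₂ h
      obtain ⟨x, rfl⟩ := ConnectedComponents.surjective_coe c₁
      obtain ⟨y, rfl⟩ := ConnectedComponents.surjective_coe c₂
      apply hsame x y
      have h' := congrArg Subtype.val h
      simpa [hcont.connectedComponentsLift_apply_coe] using h'
    · rintro ⟨s, x, hx⟩
      have hxS : x ∈ S := by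
        intro i
        have h := hx i
        cases hsi : s i
        · rw [hsi] at h; simp only [Bool.false_eq_true, if_false] at h; exact ne_of_lt h
        · rw [hsi] at h; simp only [if_true] at h; exact ne_of_gt h
      refine ⟨ConnectedComponents.mk ⟨x, hxS⟩, ?_⟩
      apply Subtype.ext
      show hcont.connectedComponentsLift (ConnectedComponents.mk ⟨x, hxS⟩) = s
      rw [hcont.connectedComponentsLift_apply_coe]
      funext i
      have h := hx i
      cases hsi : s i
      · rw [hsi] at h; simp only [Bool.false_eq_true, if_false] at h
        simp [hσ, not_lt.mpr h.le, h]
      · rw [hsi] at h; simp only [if_true] at h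
        simp [hσ, h]
  rw [Nat.card_eq_of_bijective _ hbij]
  exact Nat.card_coe_set_eq {s | HypRealizable f s}


lemma prod_sign_iff {α : Type*} (T : Finset α) (w : α → ℝ)
    (hw : ∀ j ∈ T, w j ≠ 0) :
    (0 < ∏ j ∈ T, w j ↔ Even ((T.filter fun j => w j < 0)).card) ∧ (∏ j ∈ T, w j ≠ 0) := by
  classical
  induction T using Finset.cons_induction with
  | empty => simp
  | cons a T ha IH =>
    obtain ⟨IH1, IH2⟩ := IH (fun j hj => hw j (Finset.mem_cons_of_mem hj))
    have hwa : w a ≠ 0 := hw a (Finset.mem_cons_self a T)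
    rw [Finset.prod_cons, Finset.filter_cons]
    constructor
    · rcases hwa.lt_or_gt with h | h
      · rw [if_pos h, Finset.card_cons, mul_pos_iff]
        rw [Nat.even_add_one, Nat.not_even_iff_odd, ← Nat.not_even_iff_odd, ← IH1]
        constructor
        · rintro (⟨h1, _⟩ | ⟨_, h2⟩)
          · linarith
          · intro h3; linarith
        · intro h3
          right
          refine ⟨h, ?_⟩
          rcases IH2.lt_or_gt with h4 | h4
          · exact h4
          · exact absurd h4 h3
      · rw [if_neg (not_lt.mpr h.le), mul_pos_iff, ← IH1]
        constructor
        · rintro (⟨_, h2⟩ | ⟨h1, _⟩)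
          · exact h2
          · linarith
        · intro h2; exact Or.inl ⟨h, h2⟩
    · exact mul_ne_zero hwa IH2

noncomputable def lbPoly (n : ℕ) (T : Finset (Fin n)) : Polynomial ℝ :=
  -∏ j ∈ T, (1 - Polynomial.C (((j : ℕ) : ℝ) + 1/2)⁻¹ * Polynomial.X)

lemma lbPoly_natDegree_le {n : ℕ} (T : Finset (Fin n)) : (lbPoly n T).natDegree ≤ T.card := by
  rw [lbPoly, Polynomial.natDegree_neg]
  refine le_trans (Polynomial.natDegree_prod_le _ _) ?_
  calc ∑ j ∈ T, (1 - Polynomial.C (((j : ℕ) : ℝ) + 1/2)⁻¹ * Polynomial.X).natDegree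
      ≤ ∑ _j ∈ T, 1 := by
        refine Finset.sum_le_sum fun j _ => ?_
        refine le_trans (Polynomial.natDegree_sub_le _ _) ?_
        simp only [Polynomial.natDegree_one, max_le_iff]
        exact ⟨Nat.zero_le _, le_trans (Polynomial.natDegree_C_mul_le _ _) (by simp)⟩
    _ = T.card := by simp

lemma lbPoly_coeff_zero {n : ℕ} (T : Finset (Fin n)) : (lbPoly n T).coeff 0 = -1 := by
  rw [Polynomial.coeff_zero_eq_eval_zero, lbPoly]
  simp [Polynomial.eval_prod]

lemma lbPoly_eval {n : ℕ} (T : Finset (Fin n)) (x : ℝ) :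
    (lbPoly n T).eval x = -∏ j ∈ T, (1 - (((j : ℕ) : ℝ) + 1/2)⁻¹ * x) := by
  simp [lbPoly, Polynomial.eval_prod]

lemma lbPoly_sign {n : ℕ} (T : Finset (Fin n)) (i : Fin n) :
    (0 < (lbPoly n T).eval (((i : ℕ) : ℝ) + 1)
        ↔ Odd ((T.filter fun j => j.val ≤ i.val).card))
      ∧ (lbPoly n T).eval (((i : ℕ) : ℝ) + 1) ≠ 0 := by
  classical
  set t : ℝ := ((i : ℕ) : ℝ) + 1 with ht
  set w : Fin n → ℝ := fun j => 1 - (((j : ℕ) : ℝ) + 1/2)⁻¹ * t with hw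
  have hρ : ∀ j : Fin n, (0:ℝ) < ((j : ℕ) : ℝ) + 1/2 := fun j => by positivity
  have hwneg : ∀ j : Fin n, (w j < 0 ↔ j.val ≤ i.val) := by
    intro j
    have hρj := hρ j
    rw [hw]
    simp only
    rw [sub_neg, ← div_eq_inv_mul, one_lt_div hρj, ht]
    constructor
    · intro h
      by_contra hc
      push_neg at hc
      have h2 : ((i.val : ℝ)) + 1 ≤ (j.val : ℝ) := by exact_mod_cast hc
      linarith
    · intro h
      have h2 : ((j.val : ℝ)) ≤ (i.val : ℝ) := by exact_mod_cast h
      linarith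
  have hwne : ∀ j ∈ T, w j ≠ 0 := by
    intro j _
    by_cases h : j.val ≤ i.val
    · exact ne_of_lt ((hwneg j).mpr h)
    · push_neg at h
      have h2 : ((i.val : ℝ)) + 1 ≤ (j.val : ℝ) := by exact_mod_cast h
      have hpos : 0 < w j := by
        rw [hw]
        simp only
        rw [sub_pos, ← div_eq_inv_mul, div_lt_one (hρ j), ht]
        linarith
      exact ne_of_gt hpos
  obtain ⟨hiff, hne⟩ := prod_sign_iff T w hwne
  have hfilter : (T.filter fun j => w j < 0) = (T.filter fun j => j.val ≤ i.val) :=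
    Finset.filter_congr (fun j _ => by rw [hwneg j])
  rw [hfilter] at hiff
  have heval : (lbPoly n T).eval t = -∏ j ∈ T, w j := lbPoly_eval T t
  constructor
  · rw [heval, neg_pos]
    constructor
    · intro h
      rw [← Nat.not_even_iff_odd]
      intro he
      have := hiff.mpr he
      linarith
    · intro hodd
      rcases hne.lt_or_gt with h | h
      · exact h
      · exact absurd (hiff.mp h) (Nat.not_even_iff_odd.mpr hodd)
  · rw [heval]
    simpa using hne

noncomputable def toAff {d : ℕ} (c : Fin d → ℝ) (b : ℝ) : (Fin d → ℝ) →ᵃ[ℝ] ℝ where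
  toFun := fun x => (∑ j, c j * x j) - b
  linear :=
    { toFun := fun v => ∑ j, c j * v j
      map_add' := by
        intro v w
        simp [mul_add, Finset.sum_add_distrib]
      map_smul' := by
        intro r v
        simp only [smul_eq_mul, RingHom.id_apply, Pi.smul_apply]
        rw [Finset.mul_sum]
        exact Finset.sum_congr rfl fun j _ => by ring }
  map_vadd' := by
    intro p v
    simp only [LinearMap.coe_mk, AddHom.coe_mk, vadd_eq_add, Pi.add_apply, vadd_eq_add]
    rw [show (∑ j, c j * (v j + p j)) = (∑ j, c j * v j) + ∑ j, c j * p j by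
      rw [← Finset.sum_add_distrib]; exact Finset.sum_congr rfl fun j _ => by ring]
    ring

@[simp] lemma toAff_apply {d : ℕ} (c : Fin d → ℝ) (b : ℝ) (x : Fin d → ℝ) :
    toAff c b x = (∑ j, c j * x j) - b := rfl

/-- the moment-curve arrangement functionals -/
noncomputable def lbF (n d : ℕ) : Fin n → ((Fin d → ℝ) →ᵃ[ℝ] ℝ) :=
  fun i => toAff (fun j : Fin d => (((i : ℕ) : ℝ) + 1) ^ ((j : ℕ) + 1)) 1

/-- the sign pattern of a subset -/
def lbPat {n : ℕ} (T : Finset (Fin n)) : Fin n → Bool :=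
  fun i => decide (Odd ((T.filter fun j => j.val ≤ i.val).card))

lemma lb_realizable {n d : ℕ} (T : Finset (Fin n)) (hT : T.card ≤ d) :
    HypRealizable (lbF n d) (lbPat T) := by
  classical
  refine ⟨fun j => (lbPoly n T).coeff ((j : ℕ) + 1), fun i => ?_⟩
  have hdeg : (lbPoly n T).natDegree < d + 1 :=
    Nat.lt_succ_of_le (le_trans (lbPoly_natDegree_le T) hT)
  set t : ℝ := ((i : ℕ) : ℝ) + 1 with ht
  have heval : lbF n d i (fun j => (lbPoly n T).coeff ((j : ℕ) + 1)) = (lbPoly n T).eval t := by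
    rw [Polynomial.eval_eq_sum_range' hdeg, Finset.sum_range_succ' _ d]
    simp only [lbF, toAff_apply, pow_zero, mul_one, lbPoly_coeff_zero]
    rw [Fin.sum_univ_eq_sum_range (fun j => (((i:ℕ):ℝ)+1) ^ (j + 1) * (lbPoly n T).coeff (j + 1)) d]
    rw [show (∑ k ∈ Finset.range d, (lbPoly n T).coeff (k+1) * t ^ (k+1)) + -1
        = (∑ k ∈ Finset.range d, (lbPoly n T).coeff (k+1) * t ^ (k+1)) - 1 by ring]
    congr 1
    exact Finset.sum_congr rfl fun k _ => by rw [ht]; ring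
  obtain ⟨hpos, hne⟩ := lbPoly_sign T i
  rw [lbPat]
  by_cases hodd : Odd ((T.filter fun j => j.val ≤ i.val).card)
  · rw [if_pos (by simpa using hodd)]
    rw [heval]
    exact hpos.mpr hodd
  · rw [if_neg (by simpa using hodd)]
    rw [heval]
    have h1 : ¬ 0 < (lbPoly n T).eval t := fun h => hodd (hpos.mp h)
    exact lt_of_le_of_ne (not_lt.mp h1) hne

lemma lbPat_injective {n : ℕ} : Function.Injective (lbPat (n := n)) := by
  classical
  intro T T' h
  have hpar : ∀ i : Fin n,
      (Odd ((T.filter fun j => j.val ≤ i.val).card)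
        ↔ Odd ((T'.filter fun j => j.val ≤ i.val).card)) := by
    intro i
    have := congrFun h i
    simpa [lbPat, decide_eq_decide] using this
  have key : ∀ k : ℕ, ∀ i : Fin n, i.val = k → (i ∈ T ↔ i ∈ T') := by
    intro k
    induction k using Nat.strong_induction_on with
    | _ k IH =>
      intro i hik
      have hflt : T.filter (fun j => j.val < i.val) = T'.filter (fun j => j.val < i.val) := by
        ext j
        simp only [Finset.mem_filter, and_congr_left_iff]
        intro hj
        exact IH j.val (by omega) j rfl
      have hsplit : ∀ U : Finset (Fin n), (U.filter fun j => j.val ≤ i.val).card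
          = (U.filter fun j => j.val < i.val).card + (if i ∈ U then 1 else 0) := by
        intro U
        have hdecomp : (U.filter fun j => j.val ≤ i.val)
            = (U.filter fun j => j.val < i.val) ∪ (U.filter fun j => j = i) := by
          rw [← Finset.filter_or]
          apply Finset.filter_congr
          intro j _
          constructor
          · intro hle
            rcases lt_or_eq_of_le hle with h' | h'
            · exact Or.inl h'
            · exact Or.inr (Fin.ext h')
          · rintro (h' | rfl)
            · exact le_of_lt h'
            · exact le_refl _
        rw [hdecomp, Finset.card_union_of_disjoint, Finset.filter_eq']
        · split
          · simp
          · simp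
        · rw [Finset.disjoint_left]
          intro j hj1 hj2
          simp only [Finset.mem_filter] at hj1 hj2
          rw [hj2.2] at hj1
          omega
      have h1 := hpar i
      rw [hsplit T, hsplit T', hflt, Nat.odd_iff, Nat.odd_iff] at h1
      by_cases hT : i ∈ T <;> by_cases hT' : i ∈ T' <;>
        simp only [hT, hT', if_pos, if_neg, if_true, if_false, not_false_iff] at h1 ⊢ <;>
        first
        | exact iff_of_true hT hT'
        | exact iff_of_false hT hT'
        | (exfalso; omega)
  ext i
  exact key i.val i rfl

lemma card_small_finsets (n d : ℕ) :
    {T : Finset (Fin n) | T.card ≤ d}.ncard = ∑ i ∈ Finset.range (d+1), n.choose i := by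
  classical
  have h1 : {T : Finset (Fin n) | T.card ≤ d}
      = ↑(Finset.univ.filter (fun T : Finset (Fin n) => T.card ≤ d)) := by
    ext T; simp
  rw [h1, Set.ncard_coe_finset]
  have h2 : Finset.univ.filter (fun T : Finset (Fin n) => T.card ≤ d)
      = (Finset.range (d+1)).biUnion (fun k => Finset.powersetCard k Finset.univ) := by
    ext T
    simp [Finset.mem_powersetCard_univ, Nat.lt_succ_iff]
  rw [h2, Finset.card_biUnion]
  · refine Finset.sum_congr rfl fun k _ => ?_
    rw [Finset.card_powersetCard]
    simp
  · intro a _ b _ hab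
    rw [Function.onFun, Finset.disjoint_left]
    intro T hT hT'
    rw [Finset.mem_powersetCard_univ] at hT hT'
    exact hab (hT ▸ hT')

lemma lower_bound (n d : ℕ) :
    ∑ i ∈ Finset.range (d+1), n.choose i ≤ {s | HypRealizable (lbF n d) s}.ncard := by
  classical
  rw [← card_small_finsets n d]
  have himg : lbPat '' {T : Finset (Fin n) | T.card ≤ d} ⊆ {s | HypRealizable (lbF n d) s} := by
    rintro s ⟨T, hT, rfl⟩
    exact lb_realizable T hT
  calc {T : Finset (Fin n) | T.card ≤ d}.ncard
      = (lbPat '' {T : Finset (Fin n) | T.card ≤ d}).ncard :=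
        (Set.ncard_image_of_injective _ lbPat_injective).symm
    _ ≤ {s | HypRealizable (lbF n d) s}.ncard := Set.ncard_le_ncard himg (Set.toFinite _)

/-- The maximum number of regions (connected components of the complement) into which
`n` hyperplanes can partition `ℝ^d` equals `∑_{i=0}^{d} C(n,i)`.  A hyperplane is given
by a nonzero linear functional `x ↦ ∑ j, a j * x j` and a constant `b`. -/
theorem stmt_0 (d n : ℕ) (hd : 1 ≤ d) :
    IsGreatest {k : ℕ | ∃ (a : Fin n → (Fin d → ℝ)) (b : Fin n → ℝ),
        (∀ i, a i ≠ 0) ∧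
        k = Nat.card (ConnectedComponents
          {x : Fin d → ℝ | ∀ i, ∑ j, a i j * x j ≠ b i})}
      (∑ i ∈ Finset.range (d + 1), n.choose i) := by
  constructor
  · -- the bound is attained by the moment-curve arrangement
    refine ⟨fun (i : Fin n) (j : Fin d) => (((i : ℕ) : ℝ) + 1) ^ ((j : ℕ) + 1), fun _ => 1, ?_, ?_⟩
    · intro i h0
      have h1 := congrFun h0 (⟨0, hd⟩ : Fin d)
      simp only [Pi.zero_apply] at h1
      have h2 : (0:ℝ) < (((i : ℕ) : ℝ) + 1) ^ (((⟨0, hd⟩ : Fin d) : ℕ) + 1) := by positivity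
      rw [h1] at h2
      exact lt_irrefl 0 h2
    · have hset : {x : Fin d → ℝ | ∀ i,
          ∑ j, (fun (i : Fin n) (j : Fin d) => (((i : ℕ) : ℝ) + 1) ^ ((j : ℕ) + 1)) i j * x j
            ≠ (fun _ => (1:ℝ)) i}
          = {x : Fin d → ℝ | ∀ i, lbF n d i x ≠ 0} := by
        ext x
        simp only [Set.mem_setOf_eq, lbF, toAff_apply]
        constructor
        · intro h i
          rw [sub_ne_zero]
          exact h i
        · intro h i
          have := h i
          rwa [sub_ne_zero] at this
      rw [hset, card_components_eq (lbF n d)]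
      exact le_antisymm (lower_bound n d) (ncard_realizable_le n d (lbF n d))
  · -- upper bound
    rintro k ⟨a, b, -, rfl⟩
    set F : Fin n → ((Fin d → ℝ) →ᵃ[ℝ] ℝ) := fun i => toAff (a i) (b i) with hF
    have hset : {x : Fin d → ℝ | ∀ i, ∑ j, a i j * x j ≠ b i}
        = {x : Fin d → ℝ | ∀ i, F i x ≠ 0} := by
      ext x
      simp only [Set.mem_setOf_eq, hF, toAff_apply]
      constructor
      · intro h i
        rw [sub_ne_zero]
        exact h i
      · intro h i
        have := h i
        rwa [sub_ne_zero] at this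
    rw [hset, card_components_eq F]
    exact ncard_realizable_le n d F
end

section
/- The rectified linear complexity of the circle S^1 embedded in R^2 is at least 3: any covering of S^1 by open arcs on each of which some affine map R^2 → R is injective must contain at least 3 arcs. Moreover, 3 arcs suffice, so the rectified linear complexity equals 3. -/
open MeasureTheory Set

noncomputable section RLC

def circ : Set (Fin 2 → ℝ) := {x : Fin 2 → ℝ | x 0 ^ 2 + x 1 ^ 2 = 1}

def cmap (θ : ℝ) : Fin 2 → ℝ := ![Real.cos θ, Real.sin θ]

lemma cmap_mem (θ : ℝ) : cmap θ ∈ circ := by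
  show _ = _
  simp [cmap, Real.cos_sq_add_sin_sq]

lemma cmap_inj {θ θ' : ℝ} (h : cmap θ = cmap θ') : ∃ n : ℤ, θ' = θ + n * (2 * Real.pi) := by
  have h0 : Real.cos θ = Real.cos θ' := by
    have := congrFun h 0; simpa [cmap] using this
  have h1 : Real.sin θ = Real.sin θ' := by
    have := congrFun h 1; simpa [cmap] using this
  have : Real.cos (θ' - θ) = 1 := by
    rw [Real.cos_sub, ← h0, ← h1]
    nlinarith [Real.sin_sq_add_cos_sq θ]
  obtain ⟨n, hn⟩ := (Real.cos_eq_one_iff _).mp this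
  exact ⟨n, by linarith⟩


lemma chart_phase (U : Set (Fin 2 → ℝ)) (A : (Fin 2 → ℝ) →ᵃ[ℝ] ℝ)
    (hA : Set.InjOn (⇑A) U) :
    ∃ φ : ℝ, ∀ θ θ' : ℝ, θ ∈ cmap ⁻¹' U → θ' ∈ cmap ⁻¹' U →
      Real.cos (θ - φ) = Real.cos (θ' - φ) → ∃ n : ℤ, θ' = θ + n * (2 * Real.pi) := by
  set p := A.linear ![1, 0] with hp
  set q := A.linear ![0, 1] with hq
  have hval : ∀ θ, A (cmap θ) = p * Real.cos θ + q * Real.sin θ + A 0 := by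
    intro θ
    have hdec : cmap θ = Real.cos θ • (![1,0] : Fin 2 → ℝ) + Real.sin θ • ![0,1] := by
      funext i
      fin_cases i <;> simp [cmap]
    have h2 := congrFun A.decomp (cmap θ)
    rw [h2, hdec]
    simp only [Pi.add_apply, map_add, LinearMap.map_smul, smul_eq_mul, ← hp, ← hq]
    ring
  -- unified: cos (θ-φ) equality implies A-value equality
  have key : ∃ φ : ℝ, ∀ θ θ' : ℝ,
      Real.cos (θ - φ) = Real.cos (θ' - φ) → A (cmap θ) = A (cmap θ') := by
    by_cases h0 : p = 0 ∧ q = 0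
    · exact ⟨0, fun θ θ' _ => by rw [hval, hval, h0.1, h0.2]; ring⟩
    · set z : ℂ := ⟨p, q⟩ with hz
      have hzne : z ≠ 0 := by
        intro h
        exact h0 ⟨by simpa using congrArg Complex.re h, by simpa using congrArg Complex.im h⟩
      refine ⟨Complex.arg z, fun θ θ' hcos => ?_⟩
      have habs : (0:ℝ) < ‖z‖ := by
        simpa using (norm_pos_iff.mpr hzne)
      have hcosarg : Real.cos (Complex.arg z) = p / ‖z‖ := Complex.cos_arg hzne
      have hsinarg : Real.sin (Complex.arg z) = q / ‖z‖ := Complex.sin_arg z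
      have hform : ∀ θ : ℝ, p * Real.cos θ + q * Real.sin θ
          = ‖z‖ * Real.cos (θ - Complex.arg z) := by
        intro θ
        rw [Real.cos_sub, hcosarg, hsinarg]
        field_simp
      rw [hval, hval, hform, hform, hcos]
  obtain ⟨φ, hφ⟩ := key
  refine ⟨φ, fun θ θ' hθ hθ' hcos => ?_⟩
  exact cmap_inj (hA hθ hθ' (hφ θ θ' hcos))

lemma phase_not_mem {V : Set ℝ} (hV : IsOpen V) {φ : ℝ}
    (P : ∀ θ θ' : ℝ, θ ∈ V → θ' ∈ V →
      Real.cos (θ - φ) = Real.cos (θ' - φ) → ∃ n : ℤ, θ' = θ + n * (2 * Real.pi)) :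
    φ ∉ V := by
  intro hmem
  obtain ⟨ε, hε, hball⟩ := Metric.isOpen_iff.mp hV φ hmem
  set δ := min (ε / 2) 1 with hδ
  have hδ0 : 0 < δ := lt_min (by linarith) one_pos
  have hδ1 : δ ≤ 1 := min_le_right _ _
  have h1 : φ + δ ∈ V := hball (by simp [Real.dist_eq, abs_of_pos hδ0]; linarith [min_le_left (ε/2) 1, hδ0])
  have h2 : φ - δ ∈ V := hball (by simp [Real.dist_eq, abs_of_pos hδ0]; linarith [min_le_left (ε/2) 1, hδ0])
  obtain ⟨n, hn⟩ := P (φ + δ) (φ - δ) h1 h2 (by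
    have : φ + δ - φ = δ := by ring
    have h2' : φ - δ - φ = -δ := by ring
    rw [this, h2', Real.cos_neg])
  have hπ := Real.pi_gt_three
  rcases lt_trichotomy n 0 with h | h | h
  · have : (n : ℝ) ≤ -1 := by exact_mod_cast (show n ≤ -1 by omega)
    nlinarith
  · rw [h] at hn; norm_num at hn; linarith
  · have : (1 : ℝ) ≤ (n : ℝ) := by exact_mod_cast h
    nlinarith

lemma phase_meas {V : Set ℝ} (hV : IsOpen V) {φ : ℝ}
    (P : ∀ θ θ' : ℝ, θ ∈ V → θ' ∈ V →
      Real.cos (θ - φ) = Real.cos (θ' - φ) → ∃ n : ℤ, θ' = θ + n * (2 * Real.pi)) :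
    volume (V ∩ Ico (φ - Real.pi) (φ + Real.pi)) ≤ ENNReal.ofReal Real.pi := by
  have hπ := Real.pi_pos
  set W := V ∩ Ioo (φ - Real.pi) (φ + Real.pi) with hW
  set W' := (fun θ : ℝ => 2 * φ - θ) ⁻¹' W with hW'
  have hWmeas : MeasurableSet W := (hV.inter isOpen_Ioo).measurableSet
  have hW'meas : MeasurableSet W' := hWmeas.preimage (measurable_const.sub measurable_id)
  -- μ W' = μ W
  have hμW' : volume W' = volume W := by
    have hcomp : W' = Neg.neg ⁻¹' ((fun y : ℝ => 2 * φ + y) ⁻¹' W) := by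
      ext x; simp [hW', sub_eq_add_neg]
    rw [hcomp, Measure.measure_preimage_neg, measure_preimage_add]
  -- pair-freeness
  have hpair : W ∩ W' ⊆ {φ} := by
    rintro θ ⟨⟨hθV, hθI⟩, hθ'⟩
    obtain ⟨hθ'V, hθ'I⟩ := hθ'
    obtain ⟨n, hn⟩ := P θ (2 * φ - θ) hθV hθ'V (by
      have : 2 * φ - θ - φ = -(θ - φ) := by ring
      rw [this, Real.cos_neg])
    have hθφ : |θ - φ| < Real.pi := by
      rw [abs_lt]; constructor <;> [linarith [hθI.1]; linarith [hθI.2]]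
    -- 2*(φ - θ) = n * 2π
    have hn' : 2 * (φ - θ) = n * (2 * Real.pi) := by linarith
    have : n = 0 := by
      rcases lt_trichotomy n 0 with h | h | h
      · have : (n : ℝ) ≤ -1 := by exact_mod_cast (show n ≤ -1 by omega)
        nlinarith [abs_lt.mp hθφ]
      · exact h
      · have : (1 : ℝ) ≤ (n : ℝ) := by exact_mod_cast h
        nlinarith [abs_lt.mp hθφ]
    rw [this] at hn'
    have : θ = φ := by push_cast at hn'; linarith
    simp [this]
  have hsub : W ∪ W' ⊆ Ioo (φ - Real.pi) (φ + Real.pi) := by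
    rintro x (hx | hx)
    · exact hx.2
    · simp only [hW', mem_preimage, hW, mem_inter_iff, mem_Ioo] at hx
      obtain ⟨-, h1, h2⟩ := hx
      exact ⟨by linarith, by linarith⟩
  have hbound : volume W + volume W' ≤ ENNReal.ofReal (2 * Real.pi) := by
    rw [← measure_union_add_inter W hW'meas]
    have h1 : volume (W ∪ W') ≤ ENNReal.ofReal (2 * Real.pi) := by
      calc volume (W ∪ W') ≤ volume (Ioo (φ - Real.pi) (φ + Real.pi)) := measure_mono hsub
        _ = ENNReal.ofReal (2 * Real.pi) := by rw [Real.volume_Ioo]; congr 1; ring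
    have h2 : volume (W ∩ W') = 0 := measure_mono_null hpair (measure_singleton φ)
    rw [h2, add_zero]; exact h1
  rw [hμW'] at hbound
  have hWbound : volume W ≤ ENNReal.ofReal Real.pi := by
    by_contra hlt
    push_neg at hlt
    have := ENNReal.add_lt_add hlt hlt
    rw [← ENNReal.ofReal_add hπ.le hπ.le] at this
    have h2 : ENNReal.ofReal (Real.pi + Real.pi) = ENNReal.ofReal (2 * Real.pi) := by congr 1; ring
    rw [h2] at this
    exact absurd hbound (not_le.mpr this)
  calc volume (V ∩ Ico (φ - Real.pi) (φ + Real.pi))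
      ≤ volume (W ∪ {φ - Real.pi}) := by
        apply measure_mono
        rintro x ⟨hxV, hxI⟩
        rcases eq_or_lt_of_le hxI.1 with h | h
        · right; simp [← h]
        · left; exact ⟨hxV, h, hxI.2⟩
    _ ≤ volume W + volume {φ - Real.pi} := measure_union_le _ _
    _ = volume W := by rw [measure_singleton, add_zero]
    _ ≤ ENNReal.ofReal Real.pi := hWbound

lemma per_meas {V : Set ℝ} (hV : MeasurableSet V)
    (hper : ∀ θ : ℝ, θ + 2 * Real.pi ∈ V ↔ θ ∈ V) (a b : ℝ) :
    volume (V ∩ Ico a (a + 2 * Real.pi)) = volume (V ∩ Ico b (b + 2 * Real.pi)) := by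
  have hπ := Real.pi_pos
  set π := Real.pi
  -- shift of interval pieces by 2π
  have hshift : ∀ c d : ℝ, volume (V ∩ Ico (c + 2 * π) (d + 2 * π)) = volume (V ∩ Ico c d) := by
    intro c d
    have heq : V ∩ Ico (c + 2 * π) (d + 2 * π) = (fun x : ℝ => x + (-(2 * π))) ⁻¹' (V ∩ Ico c d) := by
      ext x
      simp only [mem_inter_iff, mem_Ico, mem_preimage]
      constructor
      · rintro ⟨hxV, h1, h2⟩
        refine ⟨?_, by linarith, by linarith⟩
        rw [← hper]
        have : x + -(2*π) + 2*π = x := by ring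
        rw [this]; exact hxV
      · rintro ⟨hxV, h1, h2⟩
        refine ⟨?_, by linarith, by linarith⟩
        have := (hper (x + -(2*π))).mpr hxV
        have h3 : x + -(2*π) + 2*π = x := by ring
        rwa [h3] at this
    rw [heq, measure_preimage_add_right]
  -- key step within one period
  have key : ∀ c d : ℝ, c ≤ d → d ≤ c + 2 * π →
      volume (V ∩ Ico c (c + 2 * π)) = volume (V ∩ Ico d (d + 2 * π)) := by
    intro c d hcd hd
    have hsplit1 : volume (V ∩ Ico c (c + 2 * π))
        = volume (V ∩ Ico c d) + volume (V ∩ Ico d (c + 2 * π)) := by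
      rw [← measure_union (Disjoint.mono inter_subset_right inter_subset_right
        (Set.Ico_disjoint_Ico_same : Disjoint (Ico c d) (Ico d (c+2*π))))
        (hV.inter measurableSet_Ico)]
      rw [← inter_union_distrib_left, Set.Ico_union_Ico_eq_Ico hcd hd]
    have hsplit2 : volume (V ∩ Ico d (d + 2 * π))
        = volume (V ∩ Ico d (c + 2 * π)) + volume (V ∩ Ico (c + 2 * π) (d + 2 * π)) := by
      rw [← measure_union (Disjoint.mono inter_subset_right inter_subset_right
        (Set.Ico_disjoint_Ico_same : Disjoint (Ico d (c+2*π)) (Ico (c+2*π) (d+2*π))))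
        (hV.inter measurableSet_Ico)]
      rw [← inter_union_distrib_left, Set.Ico_union_Ico_eq_Ico hd (by linarith)]
    rw [hsplit1, hsplit2, hshift c d, add_comm]
  -- periodicity by integer multiples
  have hint : ∀ (n : ℤ) (c : ℝ),
      volume (V ∩ Ico (c + n * (2 * π)) (c + n * (2 * π) + 2 * π))
        = volume (V ∩ Ico c (c + 2 * π)) := by
    intro n
    induction n using Int.induction_on with
    | zero => intro c; norm_num
    | succ k ih =>
      intro c
      have h1 : c + (k + 1 : ℤ) * (2 * π) = (c + k * (2*π)) + 2 * π := by push_cast; ring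
      rw [h1]
      have := hshift (c + k * (2*π)) (c + k * (2*π) + 2 * π)
      have h2 : c + ↑k * (2 * π) + 2 * π + 2 * π = (c + ↑k * (2 * π) + 2 * π) + 2 * π := by ring
      rw [← ih c]
      calc volume (V ∩ Ico (c + ↑k * (2 * π) + 2 * π) (c + ↑k * (2 * π) + 2 * π + 2 * π))
          = volume (V ∩ Ico ((c + ↑k * (2 * π)) + 2 * π) ((c + ↑k * (2 * π) + 2 * π) + 2 * π)) := by ring_nf
        _ = volume (V ∩ Ico (c + ↑k * (2 * π)) (c + ↑k * (2 * π) + 2 * π)) := hshift _ _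
    | pred k ih =>
      intro c
      have h1 : (c + (-(k:ℤ) - 1) * (2 * π)) + 2 * π = c + (-(k:ℤ)) * (2 * π) := by push_cast; ring
      have := hshift (c + (-(k:ℤ) - 1) * (2 * π)) (c + (-(k:ℤ) - 1) * (2 * π) + 2 * π)
      rw [← ih c]
      calc volume (V ∩ Ico (c + (-(k:ℤ)-1 : ℤ) * (2 * π)) (c + (-(k:ℤ)-1 : ℤ) * (2 * π) + 2 * π))
          = volume (V ∩ Ico ((c + (-(k:ℤ)-1 : ℤ) * (2 * π)) + 2*π) ((c + (-(k:ℤ)-1 : ℤ) * (2 * π) + 2 * π) + 2*π)) := (hshift _ _).symm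
        _ = volume (V ∩ Ico (c + (-(k:ℤ) : ℤ) * (2 * π)) (c + (-(k:ℤ) : ℤ) * (2 * π) + 2 * π)) := by
            push_cast; ring_nf
  -- general: reduce b modulo 2π into [a, a + 2π)
  set n : ℤ := ⌊(b - a) / (2 * π)⌋ with hn
  have h2π : (0:ℝ) < 2 * π := by linarith
  have hfl1 : (n : ℝ) ≤ (b - a) / (2 * π) := Int.floor_le _
  have hfl2 : (b - a) / (2 * π) < n + 1 := Int.lt_floor_add_one _
  have hb1 : a ≤ b - n * (2 * π) := by
    have h := (le_div_iff₀ h2π).mp hfl1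
    linarith
  have hb2 : b - n * (2 * π) ≤ a + 2 * π := by
    have h := (div_lt_iff₀ h2π).mp hfl2
    nlinarith
  have hfb : volume (V ∩ Ico b (b + 2 * π))
      = volume (V ∩ Ico (b - n * (2*π)) (b - n * (2*π) + 2 * π)) := by
    have := hint n (b - n * (2*π))
    have harg : b - n * (2*π) + n * (2*π) = b := by ring
    rw [harg] at this
    exact this
  rw [hfb]
  exact key a (b - n * (2*π)) hb1 hb2

lemma cont_cmap : Continuous cmap := by
  apply continuous_pi
  intro i
  fin_cases i
  · simpa [cmap] using Real.continuous_cos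
  · simpa [cmap] using Real.continuous_sin

lemma cmap_per (θ : ℝ) : cmap (θ + 2 * Real.pi) = cmap θ := by
  funext i
  fin_cases i <;> simp [cmap, Real.cos_add_two_pi, Real.sin_add_two_pi]

lemma lower_bound_s11 (k : ℕ) (hk : k ≤ 2) (U : Fin k → Set (Fin 2 → ℝ))
    (hcov : circ ⊆ ⋃ i, U i)
    (hopin : ∀ i, (∃ V, IsOpen V ∧ U i = V ∩ circ) ∧
      ∃ A : (Fin 2 → ℝ) →ᵃ[ℝ] ℝ, Set.InjOn (⇑A) (U i)) : False := by
  classical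
  set V : Fin k → Set ℝ := fun i => cmap ⁻¹' (U i) with hVdef
  have hVopen : ∀ i, IsOpen (V i) := by
    intro i
    obtain ⟨⟨W, hW, hUW⟩, -⟩ := hopin i
    have : V i = cmap ⁻¹' W := by
      ext θ
      simp only [hVdef, mem_preimage, hUW, mem_inter_iff]
      exact ⟨fun h => h.1, fun h => ⟨h, cmap_mem θ⟩⟩
    rw [this]
    exact hW.preimage cont_cmap
  have hVcov : ∀ θ : ℝ, ∃ i, θ ∈ V i := by
    intro θ
    have := hcov (cmap_mem θ)
    exact (mem_iUnion (s := fun i => U i)).mp this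
  have hφ : ∀ i, ∃ φ : ℝ, ∀ θ θ' : ℝ, θ ∈ V i → θ' ∈ V i →
      Real.cos (θ - φ) = Real.cos (θ' - φ) → ∃ n : ℤ, θ' = θ + n * (2 * Real.pi) := by
    intro i
    obtain ⟨-, A, hA⟩ := hopin i
    exact chart_phase (U i) A hA
  have hπ := Real.pi_pos
  interval_cases k
  · obtain ⟨i, -⟩ := hVcov 0
    exact i.elim0
  · obtain ⟨φ, hP⟩ := hφ 0
    have hnot := phase_not_mem (hVopen 0) hP
    obtain ⟨i, hi⟩ := hVcov φ
    have : i = 0 := Subsingleton.elim i 0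
    rw [this] at hi
    exact hnot hi
  · -- k = 2
    obtain ⟨φ₀, hP₀⟩ := hφ 0
    obtain ⟨φ₁, hP₁⟩ := hφ 1
    have hnot₀ := phase_not_mem (hVopen 0) hP₀
    have hnot₁ := phase_not_mem (hVopen 1) hP₁
    -- V 0 and V 1 intersect
    have hcov2 : V 0 ∪ V 1 = univ := by
      ext θ
      simp only [mem_union, mem_univ, iff_true]
      obtain ⟨i, hi⟩ := hVcov θ
      fin_cases i
      · exact Or.inl hi
      · exact Or.inr hi
    have hinter : (V 0 ∩ V 1).Nonempty := by
      by_contra hemp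
      rw [Set.not_nonempty_iff_eq_empty] at hemp
      have hcl : IsClopen (V 0) := by
        constructor
        · have : V 0 = (V 1)ᶜ := by
            apply Subset.antisymm
            · intro x hx hx1
              have hmem : x ∈ V 0 ∩ V 1 := ⟨hx, hx1⟩
              rw [hemp] at hmem
              exact hmem
            · intro x hx
              have hxu : x ∈ V 0 ∪ V 1 := by rw [hcov2]; trivial
              rcases hxu with h | h
              · exact h
              · exact absurd h hx
          rw [this]
          exact (hVopen 1).isClosed_compl
        · exact hVopen 0
      rcases isClopen_iff.mp hcl with h | h
      · have : φ₁ ∈ V 0 ∪ V 1 := by rw [hcov2]; trivial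
        rcases this with h1 | h1
        · rw [h] at h1; exact h1.elim
        · exact hnot₁ h1
      · exact hnot₀ (by rw [h]; trivial)
    obtain ⟨t, ht0, ht1⟩ := hinter
    obtain ⟨ε, hε, hball⟩ := Metric.isOpen_iff.mp ((hVopen 0).inter (hVopen 1)) t ⟨ht0, ht1⟩
    set ε' := min (ε / 2) Real.pi with hε'
    have hε'0 : 0 < ε' := lt_min (by linarith) hπ
    have hε'π : ε' ≤ Real.pi := min_le_right _ _
    have hIoo : Ioo t (t + ε') ⊆ V 0 ∩ V 1 := by
      intro x hx
      apply hball
      simp only [Metric.mem_ball, Real.dist_eq, abs_lt]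
      constructor
      · linarith [hx.1]
      · have := hx.2
        have h2 : ε' ≤ ε / 2 := min_le_left _ _
        linarith
    -- measure bounds
    have hper : ∀ i : Fin 2, ∀ θ : ℝ, θ + 2 * Real.pi ∈ V i ↔ θ ∈ V i := by
      intro i θ
      simp only [hVdef, mem_preimage, cmap_per]
    have hbnd : ∀ i : Fin 2, ∀ φ : ℝ,
        (∀ θ θ' : ℝ, θ ∈ V i → θ' ∈ V i →
          Real.cos (θ - φ) = Real.cos (θ' - φ) → ∃ n : ℤ, θ' = θ + n * (2 * Real.pi)) →
        volume (V i ∩ Ico t (t + 2 * Real.pi)) ≤ ENNReal.ofReal Real.pi := by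
      intro i φ hP
      have h1 := per_meas (hVopen i).measurableSet (hper i) t (φ - Real.pi)
      have h2 : φ - Real.pi + 2 * Real.pi = φ + Real.pi := by ring
      rw [h2] at h1
      rw [h1]
      exact phase_meas (hVopen i) hP
    have hb0 := hbnd 0 φ₀ hP₀
    have hb1 := hbnd 1 φ₁ hP₁
    -- inclusion-exclusion
    set I := Ico t (t + 2 * Real.pi) with hI
    have hunion : (V 0 ∩ I) ∪ (V 1 ∩ I) = I := by
      rw [← union_inter_distrib_right, hcov2, univ_inter]
    have hImeas : MeasurableSet I := by rw [hI]; exact measurableSet_Ico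
    have hIE := measure_union_add_inter (μ := volume) (V 0 ∩ I) ((hVopen 1).measurableSet.inter hImeas)
    rw [hunion] at hIE
    have hvolI : volume I = ENNReal.ofReal (2 * Real.pi) := by
      rw [hI, Real.volume_Ico]
      congr 1
      ring
    have hlow : ENNReal.ofReal ε' ≤ volume ((V 0 ∩ I) ∩ (V 1 ∩ I)) := by
      have hsub : Ioo t (t + ε') ⊆ (V 0 ∩ I) ∩ (V 1 ∩ I) := by
        intro x hx
        have hx' := hIoo hx
        have hxI : x ∈ I := by
          rw [hI]
          exact ⟨hx.1.le, by have := hx.2; linarith⟩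
        exact ⟨⟨hx'.1, hxI⟩, hx'.2, hxI⟩
      calc ENNReal.ofReal ε' = volume (Ioo t (t + ε')) := by rw [Real.volume_Ioo]; congr 1; ring
        _ ≤ _ := measure_mono hsub
    have hfin : volume I + ENNReal.ofReal ε' ≤ ENNReal.ofReal (2 * Real.pi) := by
      calc volume I + ENNReal.ofReal ε' ≤ volume I + volume ((V 0 ∩ I) ∩ (V 1 ∩ I)) := by
            exact add_le_add_right hlow _
        _ = volume (V 0 ∩ I) + volume (V 1 ∩ I) := hIE
        _ ≤ ENNReal.ofReal Real.pi + ENNReal.ofReal Real.pi := add_le_add hb0 hb1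
        _ = ENNReal.ofReal (2 * Real.pi) := by
            rw [← ENNReal.ofReal_add hπ.le hπ.le]; congr 1; ring
    rw [hvolI] at hfin
    have hlt : ENNReal.ofReal (2 * Real.pi) < ENNReal.ofReal (2 * Real.pi) + ENNReal.ofReal ε' := by
      apply ENNReal.lt_add_right ENNReal.ofReal_ne_top
      simp only [ne_eq, ENNReal.ofReal_eq_zero, not_le]
      exact hε'0
    exact absurd hfin (not_le.mpr hlt)
lemma pos_sq_cancel {a b : ℝ} (ha : 0 < a) (hb : 0 < b) (h : a ^ 2 = b ^ 2) : a = b := by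
  have h3 : (a - b) * (a + b) = 0 := by linear_combination h
  rcases mul_eq_zero.mp h3 with h4 | h4
  · linarith
  · linarith

lemma upper_bound : ∃ U : Fin 3 → Set (Fin 2 → ℝ),
    (circ ⊆ ⋃ i, U i) ∧
    ∀ i, (∃ V, IsOpen V ∧ U i = V ∩ circ) ∧
      ∃ A : (Fin 2 → ℝ) →ᵃ[ℝ] ℝ, Set.InjOn (⇑A) (U i) := by
  classical
  refine ⟨![{x | 0 < x 0} ∩ circ, {x | x 0 < x 1} ∩ circ, {x | x 0 + x 1 < 0} ∩ circ], ?_, ?_⟩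
  · intro x hx
    rw [mem_iUnion]
    by_contra hcon
    push_neg at hcon
    have h0 := hcon 0
    have h1 := hcon 1
    have h2 := hcon 2
    simp only [Matrix.cons_val_zero, Matrix.cons_val_one, Matrix.cons_val_two, Matrix.tail_cons, Matrix.head_cons, mem_inter_iff,
      mem_setOf_eq, not_and] at h0 h1 h2
    have hc : x 0 ^ 2 + x 1 ^ 2 = 1 := hx
    have e0 : ¬ 0 < x 0 := fun h => h0 h hx
    have e1 : ¬ x 0 < x 1 := fun h => h1 h hx
    have e2 : ¬ x 0 + x 1 < 0 := fun h => h2 h hx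
    push_neg at e0 e1 e2
    have hx0 : x 0 = 0 := by linarith
    have hx1 : x 1 = 0 := by linarith
    rw [hx0, hx1] at hc
    norm_num at hc
  · intro i
    fin_cases i
    · constructor
      · exact ⟨{x | 0 < x 0}, isOpen_lt continuous_const (continuous_apply 0), by
          simp [Matrix.cons_val_zero]⟩
      · refine ⟨(LinearMap.proj 1 : (Fin 2 → ℝ) →ₗ[ℝ] ℝ).toAffineMap, ?_⟩
        rintro x ⟨hx, hxc⟩ y ⟨hy, hyc⟩ h
        simp only [LinearMap.coe_toAffineMap, LinearMap.proj_apply] at h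
        have hxc' : x 0 ^ 2 + x 1 ^ 2 = 1 := hxc
        have hyc' : y 0 ^ 2 + y 1 ^ 2 = 1 := hyc
        have hx0 : 0 < x 0 := hx
        have hy0 : 0 < y 0 := hy
        have hsq : x 0 ^ 2 = y 0 ^ 2 := by linear_combination hxc' - hyc' - (x 1 + y 1) * h
        have heq0 : x 0 = y 0 := pos_sq_cancel hx0 hy0 hsq
        funext j
        fin_cases j
        · exact heq0
        · exact h
    · constructor
      · exact ⟨{x | x 0 < x 1}, isOpen_lt (continuous_apply 0) (continuous_apply 1), by
          simp [Matrix.cons_val_one, Matrix.head_cons]⟩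
      · refine ⟨((LinearMap.proj 0 : (Fin 2 → ℝ) →ₗ[ℝ] ℝ) + LinearMap.proj 1).toAffineMap, ?_⟩
        rintro x ⟨hx, hxc⟩ y ⟨hy, hyc⟩ h
        simp only [LinearMap.coe_toAffineMap, LinearMap.add_apply, LinearMap.proj_apply] at h
        have hxc' : x 0 ^ 2 + x 1 ^ 2 = 1 := hxc
        have hyc' : y 0 ^ 2 + y 1 ^ 2 = 1 := hyc
        have hx0 : (0:ℝ) < x 1 - x 0 := by have : x 0 < x 1 := hx; linarith
        have hy0 : (0:ℝ) < y 1 - y 0 := by have : y 0 < y 1 := hy; linarith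
        have hsq : (x 1 - x 0) ^ 2 = (y 1 - y 0) ^ 2 := by
          linear_combination 2 * hxc' - 2 * hyc' - (x 0 + x 1 + y 0 + y 1) * h
        have heq := pos_sq_cancel hx0 hy0 hsq
        funext j
        fin_cases j
        · show x 0 = y 0; linarith
        · show x 1 = y 1; linarith
    · constructor
      · exact ⟨{x | x 0 + x 1 < 0}, isOpen_lt ((continuous_apply 0).add (continuous_apply 1))
          continuous_const, by simp⟩
      · refine ⟨((LinearMap.proj 0 : (Fin 2 → ℝ) →ₗ[ℝ] ℝ) - LinearMap.proj 1).toAffineMap, ?_⟩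
        rintro x ⟨hx, hxc⟩ y ⟨hy, hyc⟩ h
        simp only [LinearMap.coe_toAffineMap, LinearMap.sub_apply, LinearMap.proj_apply] at h
        have hxc' : x 0 ^ 2 + x 1 ^ 2 = 1 := hxc
        have hyc' : y 0 ^ 2 + y 1 ^ 2 = 1 := hyc
        have hx0 : (0:ℝ) < -(x 0 + x 1) := by have : x 0 + x 1 < 0 := hx; linarith
        have hy0 : (0:ℝ) < -(y 0 + y 1) := by have : y 0 + y 1 < 0 := hy; linarith
        have hsq : (-(x 0 + x 1)) ^ 2 = (-(y 0 + y 1)) ^ 2 := by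
          linear_combination 2 * hxc' - 2 * hyc' - (x 0 - x 1 + y 0 - y 1) * h
        have heq := pos_sq_cancel hx0 hy0 hsq
        funext j
        fin_cases j
        · show x 0 = y 0; linarith
        · show x 1 = y 1; linarith
/-- The rectified linear complexity of the circle `S¹ ⊆ ℝ²` equals `3`: the least number
of relatively open subsets of `S¹`, on each of which some affine map `ℝ² → ℝ` is
injective, that cover `S¹`, is exactly `3` (at least 3 are needed, and 3 suffice). -/
theorem stmt_11 :
    IsLeast {k : ℕ | ∃ U : Fin k → Set (Fin 2 → ℝ),
      ({x : Fin 2 → ℝ | x 0 ^ 2 + x 1 ^ 2 = 1} ⊆ ⋃ i, U i) ∧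
      ∀ i, (∃ V, IsOpen V ∧ U i = V ∩ {x : Fin 2 → ℝ | x 0 ^ 2 + x 1 ^ 2 = 1}) ∧
        ∃ A : (Fin 2 → ℝ) →ᵃ[ℝ] ℝ, Set.InjOn (⇑A) (U i)} 3 := by
  constructor
  · obtain ⟨U, h1, h2⟩ := upper_bound
    exact ⟨U, h1, h2⟩
  · intro k hk
    by_contra hlt
    push_neg at hlt
    obtain ⟨U, h1, h2⟩ := hk
    exact lower_bound_s11 k (by omega) U h1 h2

end RLC
end

section
/- For an Archimedean spiral ρ(θ) = (a + bθ)(cos(wθ), sin(wθ)) with a, b, w > 0 and θ ∈ (0, T], if an affine map A: R^2 → R restricts injectively to the spiral segment, then the segment subtends a total angle of less than 2π; hence the rectified linear complexity of the spiral with θ ∈ (0, T] is at least wT/(2π). -/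
open Real

/-- The Archimedean spiral `ρ(θ) = (a + bθ)(cos(wθ), sin(wθ))`. -/
noncomputable def spiral (a b w : ℝ) (θ : ℝ) : Fin 2 → ℝ :=
  ![(a + b * θ) * Real.cos (w * θ), (a + b * θ) * Real.sin (w * θ)]

lemma spiral_inj (a b w : ℝ) (ha : 0 < a) (hb : 0 < b) {x y : ℝ}
    (hx : 0 < x) (hy : 0 < y) (h : spiral a b w x = spiral a b w y) : x = y := by
  have h0 := congrFun h 0
  have h1 := congrFun h 1
  simp only [spiral, Matrix.cons_val_zero, Matrix.cons_val_one, Matrix.head_cons] at h0 h1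
  have hs1 := Real.sin_sq_add_cos_sq (w*x)
  have hs2 := Real.sin_sq_add_cos_sq (w*y)
  have hsq : (a + b*x)^2 = (a + b*y)^2 := by
    linear_combination (-((a+b*x)^2)) * hs1 + ((a+b*y)^2) * hs2
      + h0 * ((a+b*x)*Real.cos (w*x) + (a+b*y)*Real.cos (w*y))
      + h1 * ((a+b*x)*Real.sin (w*x) + (a+b*y)*Real.sin (w*y))
  have hpx : (0:ℝ) < a + b*x := by positivity
  have hpy : (0:ℝ) < a + b*y := by positivity
  have h2 := (sq_eq_sq₀ hpx.le hpy.le).1 hsq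
  have h3 : b*x = b*y := by linarith
  exact mul_left_cancel₀ hb.ne' h3

lemma spiral_angle (a b w : ℝ) (ha : 0 < a) (hb : 0 < b) (hw : 0 < w)
    (t₁ t₂ : ℝ) (ht₁ : 0 < t₁)
    (A : (Fin 2 → ℝ) →ᵃ[ℝ] ℝ)
    (hinj : Set.InjOn (⇑A) (spiral a b w '' Set.Icc t₁ t₂)) :
    w * (t₂ - t₁) < 2 * π := by
  by_contra hcon
  push_neg at hcon
  have hπ := pi_pos
  set α := A.linear ![(1:ℝ), 0] with hαdef
  set β := A.linear ![(0:ℝ), 1] with hβdef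
  have hA : ∀ θ : ℝ, A (spiral a b w θ) =
      (a + b*θ) * (α * Real.cos (w*θ) + β * Real.sin (w*θ)) + A 0 := by
    intro θ
    have hd' : A (spiral a b w θ) = A.linear (spiral a b w θ) + A 0 :=
      congrFun (AffineMap.decomp A) _
    have hsp : spiral a b w θ = ((a + b*θ) * Real.cos (w*θ)) • ![(1:ℝ),0]
        + ((a + b*θ) * Real.sin (w*θ)) • ![(0:ℝ),1] := by
      funext i; fin_cases i <;> simp [spiral]
    rw [hd', hsp, map_add, map_smul, map_smul, smul_eq_mul, smul_eq_mul]
    ring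
  by_cases hαβ : α = 0 ∧ β = 0
  · obtain ⟨h1, h2⟩ := hαβ
    have ht : t₁ < t₂ := by nlinarith
    have he : A (spiral a b w t₁) = A (spiral a b w t₂) := by
      rw [hA, hA, h1, h2]; ring
    have heq := hinj (Set.mem_image_of_mem _ (Set.mem_Icc.2 ⟨le_refl _, ht.le⟩))
      (Set.mem_image_of_mem _ (Set.mem_Icc.2 ⟨ht.le, le_refl _⟩)) he
    have := spiral_inj a b w ha hb ht₁ (lt_trans ht₁ ht) heq
    linarith
  · set z : ℂ := ⟨α, β⟩ with hz
    have hz0 : z ≠ 0 := by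
      simp only [hz, ne_eq, Complex.ext_iff, Complex.zero_re, Complex.zero_im]
      tauto
    set R := ‖z‖ with hR0
    have hR : 0 < R := norm_pos_iff.mpr hz0
    set ψ := Complex.arg z with hψ
    have hα : α = R * Real.cos ψ := by
      rw [hψ, Complex.cos_arg hz0]
      field_simp [hz]
      exact mul_comm _ _
    have hβ : β = R * Real.sin ψ := by
      rw [hψ, Complex.sin_arg]
      field_simp [hz]
      exact mul_comm _ _
    have hzero : ∀ n : ℤ, α * Real.cos (ψ + π/2 + (n:ℝ)*π) + β * Real.sin (ψ + π/2 + (n:ℝ)*π) = 0 := by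
      intro n
      have h1 : Real.cos (π/2 + (n:ℝ)*π) = 0 := by
        rw [Real.cos_add, Real.cos_pi_div_two, Real.sin_pi_div_two, Real.sin_int_mul_pi]
        ring
      have h2 := Real.cos_sub (ψ + π/2 + (n:ℝ)*π) ψ
      rw [show ψ + π/2 + (n:ℝ)*π - ψ = π/2 + (n:ℝ)*π by ring, h1] at h2
      rw [hα, hβ]
      linear_combination (-R) * h2
    set n : ℤ := ⌈(w*t₁ - ψ - π/2)/π⌉ with hn
    have hn1 : (w*t₁ - ψ - π/2)/π ≤ (n:ℝ) := Int.le_ceil _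
    have hn2 : (n:ℝ) < (w*t₁ - ψ - π/2)/π + 1 := Int.ceil_lt_add_one _
    have hn1' : w*t₁ - ψ - π/2 ≤ (n:ℝ) * π := (div_le_iff₀ hπ).1 hn1
    have hn2' : ((n:ℝ) - 1) * π < w*t₁ - ψ - π/2 := by
      have h3 : ((n:ℝ) - 1) < (w*t₁ - ψ - π/2)/π := by linarith
      exact (lt_div_iff₀ hπ).1 h3
    set θ₁ := (ψ + π/2 + (n:ℝ)*π)/w with hθ₁
    set θ₂ := (ψ + π/2 + (n:ℝ)*π + π)/w with hθ₂
    have hwθ₁ : w * θ₁ = ψ + π/2 + (n:ℝ)*π := by rw [hθ₁]; field_simp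
    have hwθ₂ : w * θ₂ = ψ + π/2 + (n:ℝ)*π + π := by rw [hθ₂]; field_simp
    have hθ₁t : t₁ ≤ θ₁ := by
      rw [hθ₁, le_div_iff₀ hw]
      nlinarith
    have hθ₁₂ : θ₁ < θ₂ := by
      rw [hθ₁, hθ₂, div_lt_div_iff₀ hw hw]
      nlinarith [mul_pos hπ hw]
    have hθ₂t : θ₂ ≤ t₂ := by
      rw [hθ₂, div_le_iff₀ hw]
      nlinarith
    have hz1 := hzero n
    have hz2 := hzero (n+1)
    push_cast at hz2
    rw [show ψ + π/2 + ((n:ℝ)+1)*π = ψ + π/2 + (n:ℝ)*π + π by ring] at hz2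
    have he : A (spiral a b w θ₁) = A (spiral a b w θ₂) := by
      rw [hA, hA, hwθ₁, hwθ₂, hz1, hz2]; ring
    have heq := hinj (Set.mem_image_of_mem _ (Set.mem_Icc.2 ⟨hθ₁t, hθ₁₂.le.trans hθ₂t⟩))
      (Set.mem_image_of_mem _ (Set.mem_Icc.2 ⟨hθ₁t.trans hθ₁₂.le, hθ₂t⟩)) he
    have hp1 : 0 < θ₁ := lt_of_lt_of_le ht₁ hθ₁t
    have := spiral_inj a b w ha hb hp1 (lt_trans hp1 hθ₁₂) heq
    exact absurd this (ne_of_lt hθ₁₂)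

/-- For an Archimedean spiral with `a, b, w > 0` and parameter range `(0, T]`:
(1) if an affine map `A : ℝ² → ℝ` is injective on a spiral segment `ρ(Icc t₁ t₂)`
(with `0 < t₁`, `t₂ ≤ T`), then the segment subtends a total angle `w(t₂ - t₁) < 2π`;
(2) hence any covering of the spiral over `(0, T]` by `k` linear-rectifiable segments
satisfies `k ≥ wT/(2π)`. -/
theorem stmt_12 (a b w T : ℝ) (ha : 0 < a) (hb : 0 < b) (hw : 0 < w) (hT : 0 < T) :
    (∀ t₁ t₂ : ℝ, 0 < t₁ → t₂ ≤ T →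
      ∀ A : (Fin 2 → ℝ) →ᵃ[ℝ] ℝ,
        Set.InjOn (⇑A) (spiral a b w '' Set.Icc t₁ t₂) →
        w * (t₂ - t₁) < 2 * π) ∧
    ∀ (k : ℕ) (c d : Fin k → ℝ),
      Set.Ioc 0 T ⊆ (⋃ j, Set.Icc (c j) (d j)) →
      (∀ j, ∃ A : (Fin 2 → ℝ) →ᵃ[ℝ] ℝ,
        Set.InjOn (⇑A) (spiral a b w '' (Set.Icc (c j) (d j) ∩ Set.Ioc 0 T))) →
      w * T / (2 * π) ≤ (k : ℝ) := by
  have hπ := pi_pos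
  constructor
  · intro t₁ t₂ ht₁ _ A hinj
    exact spiral_angle a b w ha hb hw t₁ t₂ ht₁ A hinj
  · intro k c d hcov hinj
    have key : ∀ j, min (d j) T - max (c j) 0 ≤ 2*π/w := by
      intro j
      by_contra hj
      push_neg at hj
      set m := max (c j) 0 with hm
      set M := min (d j) T with hM
      have hm0 : 0 ≤ m := le_max_right _ _
      obtain ⟨A, hA⟩ := hinj j
      set t₁ := m + ((M - m) - 2*π/w)/2 with ht₁def
      have hpw : 0 < 2*π/w := by positivity
      have h1 : (0:ℝ) < t₁ := by
        rw [ht₁def]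
        nlinarith
      have hsub : Set.Icc t₁ M ⊆ Set.Icc (c j) (d j) ∩ Set.Ioc 0 T := by
        intro x hx
        obtain ⟨hx1, hx2⟩ := hx
        have hcm : c j ≤ m := le_max_left _ _
        have hMd : M ≤ d j := min_le_left _ _
        have hMT : M ≤ T := min_le_right _ _
        refine ⟨⟨?_, ?_⟩, ?_, ?_⟩ <;> [skip; linarith; skip; linarith]
        · rw [ht₁def] at hx1; linarith
        · rw [ht₁def] at hx1; linarith
      have hlt := spiral_angle a b w ha hb hw t₁ M h1 A
        (hA.mono (Set.image_mono hsub))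
      have h3 : M - t₁ = (M - m)/2 + (2*π/w)/2 := by rw [ht₁def]; ring
      rw [h3] at hlt
      have h4 : w * ((M - m)/2 + (2*π/w)/2) = w*(M-m)/2 + π := by field_simp
      rw [h4] at hlt
      have h5 : w * (2*π/w) < w * (M - m) := by
        exact mul_lt_mul_of_pos_left hj hw
      have h6 : w * (2*π/w) = 2*π := by field_simp
      linarith
    have hsub2 : Set.Ioc (0:ℝ) T ⊆ ⋃ j, Set.Icc (max (c j) 0) (min (d j) T) := by
      intro x hx
      rcases Set.mem_iUnion.1 (hcov hx) with ⟨j, hj⟩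
      exact Set.mem_iUnion.2 ⟨j, max_le hj.1 hx.1.le, le_min hj.2 hx.2⟩
    have hm : MeasureTheory.volume (Set.Ioc (0:ℝ) T) ≤
        ∑' j : Fin k, MeasureTheory.volume (Set.Icc (max (c j) 0) (min (d j) T)) :=
      le_trans (MeasureTheory.measure_mono hsub2) (MeasureTheory.measure_iUnion_le _)
    rw [Real.volume_Ioc] at hm
    have hbd : ∀ j : Fin k, MeasureTheory.volume (Set.Icc (max (c j) 0) (min (d j) T))
        ≤ ENNReal.ofReal (2*π/w) := by
      intro j
      rw [Real.volume_Icc]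
      exact ENNReal.ofReal_le_ofReal (key j)
    have htot : ENNReal.ofReal (T - 0) ≤ ENNReal.ofReal ((k:ℝ) * (2*π/w)) := by
      refine hm.trans ?_
      calc ∑' j : Fin k, MeasureTheory.volume (Set.Icc (max (c j) 0) (min (d j) T))
          ≤ ∑' _j : Fin k, ENNReal.ofReal (2*π/w) := ENNReal.tsum_le_tsum hbd
        _ = (k : ENNReal) * ENNReal.ofReal (2*π/w) := by
            rw [tsum_fintype]
            simp [Finset.sum_const, nsmul_eq_mul]
        _ = ENNReal.ofReal ((k:ℝ) * (2*π/w)) := by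
            rw [ENNReal.ofReal_mul (by positivity), ENNReal.ofReal_natCast]
    have hfin : T - 0 ≤ (k:ℝ) * (2*π/w) :=
      (ENNReal.ofReal_le_ofReal_iff (by positivity)).1 htot
    rw [div_le_iff₀ (by positivity : (0:ℝ) < 2*π)]
    have h7 : (k:ℝ) * (2*π/w) * w = (k:ℝ) * (2*π) := by field_simp
    nlinarith [mul_le_mul_of_nonneg_right hfin hw.le]
end
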